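/- arXiv:1803.11379 — 4 statements merged into one kernel-verified Lean document; each statement's English description precedes it below -/
import Mathlib

section
/- Let Φ be a continuous weakly increasing function with infimum condition inf_{D°} Φ∘f = inf_D Φ∘f finite, B : D° → ℝ^m_+ a nonnegative barrier, and {τ_k} positive strictly decreasing. If x^k minimizes x ↦ Φ(f(x) + τ_k B(x)) over D° for each k, then the values Φ_k := Φ(f(x^k) + τ_k B(x^k)) satisfy Φ* ≤ Φ_{k+1} ≤ Φ_k for all k, where Φ* := inf_{x ∈ D} Φ(f(x)). -/
open Filter Topology

/- The barrier values decrease because `x (k+1)` minimizes the `τ (k+1)`-objective, which at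
`x k` is at most the `τ k`-objective there (the barrier is nonnegative and `τ` decreases), and
they stay above `Φ*` because dropping the nonnegative barrier term can only lower `Φ`.
Both steps need `Φ` monotone for `≤`, which follows from strict monotonicity for the strong
order by continuity: `u ≤ v` gives `u ≺ v + ε` for every `ε > 0`. -/

theorem monotone_of_continuous_of_strongLT {ι α : Type*} [TopologicalSpace α] [Preorder α]
    [ClosedIciTopology α] {Φ : (ι → ℝ) → α} (hc : Continuous Φ)
    (h : ∀ u v : ι → ℝ, StrongLT u v → Φ u < Φ v) : Monotone Φ := by
  intro u v huv
  have hlim : Tendsto (fun ε : ℝ => Φ (v + Function.const ι ε)) (𝓝[>] 0) (𝓝 (Φ v)) := by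
    have hcont : Continuous fun ε : ℝ => Φ (v + Function.const ι ε) := by fun_prop
    simpa using (hcont.tendsto 0).mono_left nhdsWithin_le_nhds
  refine ge_of_tendsto hlim ?_
  filter_upwards [self_mem_nhdsWithin] with ε hε
  exact (h u _ fun i => (huv i).trans_lt (lt_add_of_pos_right _ hε)).le

theorem Monotone.apply_add_smul_le_of_le {E α : Type*} [AddCommGroup E] [PartialOrder E]
    [IsOrderedAddMonoid E] [Module ℝ E] [SMulPosMono ℝ E] [Preorder α] {Φ : E → α}
    (hΦ : Monotone Φ) (a : E) {b : E} (hb : 0 ≤ b) {s t : ℝ} (hst : s ≤ t) :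
    Φ (a + s • b) ≤ Φ (a + t • b) :=
  hΦ (add_le_add_right (smul_le_smul_of_nonneg_right hst hb) a)

theorem stmt_9_general (n m p : ℕ)
    (f : (Fin n → ℝ) → (Fin m → ℝ)) (g : (Fin n → ℝ) → (Fin p → ℝ))
    (D : Set (Fin n → ℝ)) (hD : D = {x | ∀ i, g x i ≤ 0})
    (Dint : Set (Fin n → ℝ)) (hDint : Dint = {x | ∀ i, g x i < 0})
    (B : (Fin n → ℝ) → (Fin m → ℝ)) (hB : ∀ x ∈ Dint, ∀ i, 0 ≤ B x i)
    (Φ : (Fin m → ℝ) → ℝ) (hΦc : Continuous Φ)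
    (hΦw : ∀ u v : Fin m → ℝ, (∀ i, u i < v i) → Φ u < Φ v)
    (τ : ℕ → ℝ) (hτpos : ∀ k, 0 < τ k) (hτdec : StrictAnti τ)
    (hbdd : BddBelow ((fun y => Φ (f y)) '' D))
    (x : ℕ → (Fin n → ℝ))
    (hx : ∀ k, x k ∈ Dint ∧
      ∀ y ∈ Dint, Φ (f (x k) + τ k • B (x k)) ≤ Φ (f y + τ k • B y)) :
    ∀ k, sInf ((fun y => Φ (f y)) '' D) ≤ Φ (f (x (k+1)) + τ (k+1) • B (x (k+1))) ∧
      Φ (f (x (k+1)) + τ (k+1) • B (x (k+1))) ≤ Φ (f (x k) + τ k • B (x k)) := by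
  have hmono : Monotone Φ := monotone_of_continuous_of_strongLT hΦc hΦw
  have hsub : Dint ⊆ D := by
    rw [hD, hDint]
    exact fun y hy i => (hy i).le
  intro k
  obtain ⟨hxk₁, hmin⟩ := hx (k + 1)
  have hxk := (hx k).1
  constructor
  · calc sInf ((fun y => Φ (f y)) '' D) ≤ Φ (f (x (k+1))) := csInf_le hbdd ⟨_, hsub hxk₁, rfl⟩
      _ ≤ Φ (f (x (k+1)) + τ (k+1) • B (x (k+1))) := by
        simpa using hmono.apply_add_smul_le_of_le (f (x (k+1))) (hB _ hxk₁) (hτpos (k+1)).le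
  · exact (hmin _ hxk).trans
      (hmono.apply_add_smul_le_of_le _ (hB _ hxk) (hτdec (Nat.lt_succ_self k)).le)

theorem stmt_9 (n m p : ℕ)
    (f : (Fin n → ℝ) → (Fin m → ℝ)) (g : (Fin n → ℝ) → (Fin p → ℝ))
    (hf : Continuous f) (hg : Continuous g)
    (D : Set (Fin n → ℝ)) (hD : D = {x | ∀ i, g x i ≤ 0})
    (Dint : Set (Fin n → ℝ)) (hDint : Dint = {x | ∀ i, g x i < 0})
    (hne : Dint.Nonempty)
    (B : (Fin n → ℝ) → (Fin m → ℝ)) (hB : ∀ x ∈ Dint, ∀ i, 0 ≤ B x i)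
    (Φ : (Fin m → ℝ) → ℝ) (hΦc : Continuous Φ)
    (hΦw : ∀ u v : Fin m → ℝ, (∀ i, u i < v i) → Φ u < Φ v)
    (τ : ℕ → ℝ) (hτpos : ∀ k, 0 < τ k) (hτdec : StrictAnti τ)
    (hbdd : BddBelow ((fun y => Φ (f y)) '' D))
    (hinf : sInf ((fun y => Φ (f y)) '' Dint) = sInf ((fun y => Φ (f y)) '' D))
    (x : ℕ → (Fin n → ℝ))
    (hx : ∀ k, x k ∈ Dint ∧
      ∀ y ∈ Dint, Φ (f (x k) + τ k • B (x k)) ≤ Φ (f y + τ k • B y)) :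
    ∀ k, sInf ((fun y => Φ (f y)) '' D) ≤ Φ (f (x (k+1)) + τ (k+1) • B (x (k+1))) ∧
      Φ (f (x (k+1)) + τ (k+1) • B (x (k+1))) ≤ Φ (f (x k) + τ k • B (x k)) :=
  stmt_9_general n m p f g D hD Dint hDint B hB Φ hΦc hΦw τ hτpos hτdec hbdd x hx
end

section
/- Let {x^k} ⊂ D° satisfy x^k ∈ argmin_{x ∈ D°} Φ(f(x) + τ_k B(x)) with τ_k ↓ 0, Φ continuous weakly increasing, B ≥ 0, and inf_{D°} Φ∘f = inf_D Φ∘f ∈ ℝ. Then lim_k Φ(f(x^k) + τ_k B(x^k)) = inf_{x ∈ D} Φ(f(x)). -/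
/-!
The penalized values are squeezed. Since `B ≥ 0` and `Φ` is monotone, each of them is at least
`Φ (f (x k))`, hence at least the infimum over `D`. Conversely, for any interior point `y` the
minimality of `x k` bounds them by `Φ (f y + τ k • B y)`, which tends to `Φ (f y)`; as the infimum
over `D°` equals the one over `D`, such values `Φ (f y)` come arbitrarily close to it.
-/

open Filter Topology

theorem monotone_of_continuous_of_strict_pi {ι : Type*} {Φ : (ι → ℝ) → ℝ} (hΦc : Continuous Φ)
    (hΦ : ∀ u v : ι → ℝ, (∀ i, u i < v i) → Φ u < Φ v) : Monotone Φ := by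
  intro u v huv
  have hshift : Continuous fun ε : ℝ => Φ (v + fun _ => ε) := by fun_prop
  have hlim : Tendsto (fun ε : ℝ => Φ (v + fun _ => ε)) (𝓝[>] 0) (𝓝 (Φ v)) := by
    simpa [← Pi.zero_def] using (hshift.continuousWithinAt (s := Set.Ioi 0) (x := 0)).tendsto
  refine ge_of_tendsto hlim (eventually_nhdsWithin_of_forall fun ε hε => (hΦ _ _ fun i => ?_).le)
  exact (huv i).trans_lt (lt_add_of_pos_right _ hε)

theorem tendsto_comp_add_smul_of_tendsto_zero {E F β : Type*} [TopologicalSpace E]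
    [AddCommGroup E] [Module ℝ E] [ContinuousAdd E] [ContinuousSMul ℝ E] [TopologicalSpace F]
    {Φ : E → F} {a : E} (hΦ : ContinuousAt Φ a) (b : E) {τ : β → ℝ} {l : Filter β}
    (hτ : Tendsto τ l (𝓝 0)) : Tendsto (fun k => Φ (a + τ k • b)) l (𝓝 (Φ a)) :=
  hΦ.tendsto.comp (by simpa using (hτ.smul_const b).const_add a)

theorem tendsto_sInf_image_of_forall_dominated {α β : Type*} {S : Set α} (hS : S.Nonempty)
    (h : α → ℝ) {F : β → ℝ} {l : Filter β} (hlow : ∀ᶠ k in l, sInf (h '' S) ≤ F k)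
    (hup : ∀ y ∈ S, ∃ G : β → ℝ, Tendsto G l (𝓝 (h y)) ∧ ∀ᶠ k in l, F k ≤ G k) :
    Tendsto F l (𝓝 (sInf (h '' S))) := by
  refine tendsto_order.2 ⟨fun c hc => ?_, fun c hc => ?_⟩
  · filter_upwards [hlow] with k hk
    exact hc.trans_le hk
  · obtain ⟨_, ⟨y, hy, rfl⟩, hyc⟩ := exists_lt_of_csInf_lt (hS.image h) hc
    obtain ⟨G, hG, hFG⟩ := hup y hy
    filter_upwards [hG.eventually_lt_const hyc, hFG] with k hGc hFk
    exact hFk.trans_lt hGc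

theorem stmt_11_general (n m p : ℕ)
    (f : (Fin n → ℝ) → (Fin m → ℝ)) (g : (Fin n → ℝ) → (Fin p → ℝ))
    (D : Set (Fin n → ℝ)) (hD : D = {x | ∀ i, g x i ≤ 0})
    (Dint : Set (Fin n → ℝ)) (hDint : Dint = {x | ∀ i, g x i < 0})
    (hne : Dint.Nonempty)
    (B : (Fin n → ℝ) → (Fin m → ℝ))
    (hB : ∀ x ∈ Dint, ∀ i, 0 ≤ B x i)
    (Φ : (Fin m → ℝ) → ℝ) (hΦc : Continuous Φ)
    (hΦw : ∀ u v : Fin m → ℝ, (∀ i, u i < v i) → Φ u < Φ v)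
    (τ : ℕ → ℝ) (hτpos : ∀ k, 0 < τ k)
    (hτ0 : Tendsto τ atTop (𝓝 0))
    (hbdd : BddBelow ((fun y => Φ (f y)) '' D))
    (hinf : sInf ((fun y => Φ (f y)) '' Dint) = sInf ((fun y => Φ (f y)) '' D))
    (x : ℕ → (Fin n → ℝ))
    (hx : ∀ k, x k ∈ Dint ∧
      ∀ y ∈ Dint, Φ (f (x k) + τ k • B (x k)) ≤ Φ (f y + τ k • B y)) :
    Tendsto (fun k => Φ (f (x k) + τ k • B (x k))) atTop
      (𝓝 (sInf ((fun y => Φ (f y)) '' D))) := by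
  have hsub : Dint ⊆ D := by
    rw [hD, hDint]
    exact fun z hz i => (hz i).le
  have hmono := monotone_of_continuous_of_strict_pi hΦc hΦw
  rw [← hinf]
  refine tendsto_sInf_image_of_forall_dominated hne _ (Eventually.of_forall fun k => ?_)
    fun y hy => ⟨_, tendsto_comp_add_smul_of_tendsto_zero hΦc.continuousAt (B y) hτ0,
      Eventually.of_forall fun k => (hx k).2 y hy⟩
  calc sInf ((fun y => Φ (f y)) '' Dint) ≤ Φ (f (x k)) :=
        csInf_le (hbdd.mono (Set.image_mono hsub)) ⟨x k, (hx k).1, rfl⟩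
    _ ≤ Φ (f (x k) + τ k • B (x k)) :=
        hmono (le_add_of_nonneg_right (smul_nonneg (hτpos k).le (hB (x k) (hx k).1)))

theorem stmt_11 (n m p : ℕ)
    (f : (Fin n → ℝ) → (Fin m → ℝ)) (g : (Fin n → ℝ) → (Fin p → ℝ))
    (hf : Continuous f) (hg : Continuous g)
    (D : Set (Fin n → ℝ)) (hD : D = {x | ∀ i, g x i ≤ 0})
    (Dint : Set (Fin n → ℝ)) (hDint : Dint = {x | ∀ i, g x i < 0})
    (hne : Dint.Nonempty)
    (B : (Fin n → ℝ) → (Fin m → ℝ)) (hBc : ContinuousOn B Dint)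
    (hB : ∀ x ∈ Dint, ∀ i, 0 ≤ B x i)
    (Φ : (Fin m → ℝ) → ℝ) (hΦc : Continuous Φ)
    (hΦw : ∀ u v : Fin m → ℝ, (∀ i, u i < v i) → Φ u < Φ v)
    (τ : ℕ → ℝ) (hτpos : ∀ k, 0 < τ k) (hτdec : StrictAnti τ)
    (hτ0 : Tendsto τ atTop (𝓝 0))
    (hbdd : BddBelow ((fun y => Φ (f y)) '' D))
    (hinf : sInf ((fun y => Φ (f y)) '' Dint) = sInf ((fun y => Φ (f y)) '' D))
    (x : ℕ → (Fin n → ℝ))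
    (hx : ∀ k, x k ∈ Dint ∧
      ∀ y ∈ Dint, Φ (f (x k) + τ k • B (x k)) ≤ Φ (f y + τ k • B y)) :
    Tendsto (fun k => Φ (f (x k) + τ k • B (x k))) atTop
      (𝓝 (sInf ((fun y => Φ (f y)) '' D))) :=
  stmt_11_general n m p f g D hD Dint hDint hne B hB Φ hΦc hΦw τ hτpos hτ0 hbdd hinf x hx
end

section
/- Let {x^k} be generated by the multiobjective barrier method: x^k ∈ argmin_{x ∈ D°} Φ(f(x) + τ_k B(x)) with τ_k ↓ 0, τ_k > 0 strictly decreasing, Φ continuous weakly increasing, B : D° → ℝ^m nonnegative continuous, and inf_{D°} Φ∘f = inf_D Φ∘f ∈ ℝ. If x̄ ∈ D is an accumulation point of {x^k}, then x̄ ∈ argmin_{x ∈ D} Φ(f(x)), and consequently x̄ is a weak Pareto optimum of min_{x ∈ D} f(x). -/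
/-!
Along a subsequence `x (φ j) → xbar`, nonnegativity of the barrier and monotonicity of `Φ` give
`Φ (f (x (φ j))) ≤ Φ (f y + τ (φ j) • B y)` for every interior `y`; letting `j → ∞` yields
`Φ (f xbar) ≤ Φ (f y)` on `D°`, and the hypothesis `inf_{D°} Φ ∘ f = inf_D Φ ∘ f` extends this to `D`.
Weak Pareto optimality follows because `Φ` is strictly increasing for the componentwise strict order.
-/

open Filter Topology

lemma monotone_of_continuous_of_forall_lt {ι : Type*} {Φ : (ι → ℝ) → ℝ} (hΦc : Continuous Φ)
    (hΦw : ∀ u v : ι → ℝ, (∀ i, u i < v i) → Φ u < Φ v) : Monotone Φ := by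
  intro u v huv
  have hshift : Tendsto (fun ε : ℝ => v + fun _ => ε) (𝓝[>] 0) (𝓝 v) := by
    have : Continuous (fun ε : ℝ => v + fun _ => ε) := by fun_prop
    have h := (this.tendsto 0).mono_left (nhdsWithin_le_nhds (s := Set.Ioi 0))
    rwa [← Pi.zero_def, add_zero] at h
  refine ge_of_tendsto ((hΦc.tendsto v).comp hshift) ?_
  filter_upwards [self_mem_nhdsWithin] with ε (hε : 0 < ε)
  exact (hΦw u _ fun i => (huv i).trans_lt (by simpa using hε)).le

lemma le_of_tendsto_penalized_minimizers {α X ι : Type*} [TopologicalSpace X]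
    {l : Filter α} [l.NeBot] {f B : X → ι → ℝ} {Φ : (ι → ℝ) → ℝ}
    (hΦc : Continuous Φ) (hΦ : Monotone Φ) {S : Set X} (hB : ∀ x ∈ S, 0 ≤ B x)
    {τ : α → ℝ} (hτ : ∀ a, 0 ≤ τ a) (hτ0 : Tendsto τ l (𝓝 0))
    {x : α → X} (hxS : ∀ a, x a ∈ S)
    (hxmin : ∀ a, ∀ y ∈ S, Φ (f (x a) + τ a • B (x a)) ≤ Φ (f y + τ a • B y))
    {xbar : X} (hf : ContinuousAt f xbar) (hx : Tendsto x l (𝓝 xbar)) :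
    ∀ y ∈ S, Φ (f xbar) ≤ Φ (f y) := by
  intro y hy
  have hbound : ∀ a, Φ (f (x a)) ≤ Φ (f y + τ a • B y) := fun a =>
    (hΦ (le_add_of_nonneg_right (smul_nonneg (hτ a) (hB _ (hxS a))))).trans (hxmin a y hy)
  have hlim_left : Tendsto (fun a => Φ (f (x a))) l (𝓝 (Φ (f xbar))) :=
    (hΦc.continuousAt.comp hf).tendsto.comp hx
  have hlim_right : Tendsto (fun a => Φ (f y + τ a • B y)) l (𝓝 (Φ (f y))) := by
    have : Tendsto (fun a => f y + τ a • B y) l (𝓝 (f y)) := by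
      simpa using tendsto_const_nhds.add (hτ0.smul_const (B y))
    exact (hΦc.tendsto _).comp this
  exact le_of_tendsto_of_tendsto' hlim_left hlim_right hbound

lemma forall_le_of_csInf_image_eq {X : Type*} {F : X → ℝ} {S T : Set X} {c : ℝ}
    (hS : S.Nonempty) (hT : BddBelow (F '' T)) (hST : sInf (F '' S) = sInf (F '' T))
    (hc : ∀ y ∈ S, c ≤ F y) : ∀ y ∈ T, c ≤ F y := fun y hy =>
  calc c ≤ sInf (F '' S) := le_csInf (hS.image F) (by rintro _ ⟨z, hz, rfl⟩; exact hc z hz)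
    _ = sInf (F '' T) := hST
    _ ≤ F y := csInf_le hT ⟨y, hy, rfl⟩

theorem stmt_12_general (n m : ℕ)
    (f : (Fin n → ℝ) → (Fin m → ℝ))
    (hf : Continuous f)
    (D : Set (Fin n → ℝ))
    (Dint : Set (Fin n → ℝ))
    (B : (Fin n → ℝ) → (Fin m → ℝ))
    (hB : ∀ x ∈ Dint, ∀ i, 0 ≤ B x i)
    (Φ : (Fin m → ℝ) → ℝ) (hΦc : Continuous Φ)
    (hΦw : ∀ u v : Fin m → ℝ, (∀ i, u i < v i) → Φ u < Φ v)
    (τ : ℕ → ℝ) (hτpos : ∀ k, 0 < τ k)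
    (hτ0 : Tendsto τ atTop (𝓝 0))
    (hbdd : BddBelow ((fun y => Φ (f y)) '' D))
    (hinf : sInf ((fun y => Φ (f y)) '' Dint) = sInf ((fun y => Φ (f y)) '' D))
    (x : ℕ → (Fin n → ℝ))
    (hx : ∀ k, x k ∈ Dint ∧
      ∀ y ∈ Dint, Φ (f (x k) + τ k • B (x k)) ≤ Φ (f y + τ k • B y))
    (xbar : Fin n → ℝ)
    (hacc : ∃ φ : ℕ → ℕ, StrictMono φ ∧ Tendsto (fun j => x (φ j)) atTop (𝓝 xbar)) :
    (∀ y ∈ D, Φ (f xbar) ≤ Φ (f y)) ∧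
    ¬ ∃ y ∈ D, ∀ j, f y j < f xbar j := by
  obtain ⟨φ, hφ, hconv⟩ := hacc
  have hmin_int : ∀ y ∈ Dint, Φ (f xbar) ≤ Φ (f y) :=
    le_of_tendsto_penalized_minimizers hΦc (monotone_of_continuous_of_forall_lt hΦc hΦw)
      hB (fun j => (hτpos (φ j)).le) (hτ0.comp hφ.tendsto_atTop)
      (fun j => (hx (φ j)).1) (fun j => (hx (φ j)).2) hf.continuousAt hconv
  have hmin : ∀ y ∈ D, Φ (f xbar) ≤ Φ (f y) :=
    forall_le_of_csInf_image_eq ⟨x 0, (hx 0).1⟩ hbdd hinf hmin_int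
  exact ⟨hmin, fun ⟨y, hy, hlt⟩ => (hmin y hy).not_gt (hΦw _ _ hlt)⟩

theorem stmt_12 (n m p : ℕ)
    (f : (Fin n → ℝ) → (Fin m → ℝ)) (g : (Fin n → ℝ) → (Fin p → ℝ))
    (hf : Continuous f) (hg : Continuous g)
    (D : Set (Fin n → ℝ)) (hD : D = {x | ∀ i, g x i ≤ 0})
    (Dint : Set (Fin n → ℝ)) (hDint : Dint = {x | ∀ i, g x i < 0})
    (hne : Dint.Nonempty)
    (B : (Fin n → ℝ) → (Fin m → ℝ)) (hBc : ContinuousOn B Dint)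
    (hB : ∀ x ∈ Dint, ∀ i, 0 ≤ B x i)
    (Φ : (Fin m → ℝ) → ℝ) (hΦc : Continuous Φ)
    (hΦw : ∀ u v : Fin m → ℝ, (∀ i, u i < v i) → Φ u < Φ v)
    (τ : ℕ → ℝ) (hτpos : ∀ k, 0 < τ k) (hτdec : StrictAnti τ)
    (hτ0 : Tendsto τ atTop (𝓝 0))
    (hbdd : BddBelow ((fun y => Φ (f y)) '' D))
    (hinf : sInf ((fun y => Φ (f y)) '' Dint) = sInf ((fun y => Φ (f y)) '' D))
    (x : ℕ → (Fin n → ℝ))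
    (hx : ∀ k, x k ∈ Dint ∧
      ∀ y ∈ Dint, Φ (f (x k) + τ k • B (x k)) ≤ Φ (f y + τ k • B y))
    (xbar : Fin n → ℝ) (hxbarD : xbar ∈ D)
    (hacc : ∃ φ : ℕ → ℕ, StrictMono φ ∧ Tendsto (fun j => x (φ j)) atTop (𝓝 xbar)) :
    (∀ y ∈ D, Φ (f xbar) ≤ Φ (f y)) ∧
    ¬ ∃ y ∈ D, ∀ j, f y j < f xbar j :=
  stmt_12_general n m f hf D Dint B hB Φ hΦc hΦw τ hτpos hτ0 hbdd hinf x hx xbar hacc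
end

section
/- Under the MBM setting with Φ continuous strongly increasing, any accumulation point x̄ ∈ D of the generated sequence {x^k} is a Pareto optimal solution of min_{x ∈ D} f(x). -/
/-!
Since `B ≥ 0` and `Φ` is monotone, each `x^k` satisfies
`Φ (f x^k) ≤ Φ (f x^k + τ_k B x^k) ≤ Φ (f z + τ_k B z)` for every interior point `z`.
Letting `k → ∞` along the subsequence gives `Φ (f x̄) ≤ Φ (f z)`, so `Φ (f x̄)` bounds the infimum
over the interior, which equals the infimum over `D`; thus `x̄` minimises `Φ ∘ f` on `D`.
A point dominating `x̄` would strictly decrease `Φ ∘ f`, hence none exists.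
-/

open Filter Topology

theorem strictMono_of_forall_le_of_exists_lt {ι β : Type*} {α : ι → Type*}
    [∀ i, Preorder (α i)] [Preorder β] {Φ : (∀ i, α i) → β}
    (hΦ : ∀ u v : ∀ i, α i, (∀ i, u i ≤ v i) → (∃ j, u j < v j) → Φ u < Φ v) :
    StrictMono Φ := fun u v huv =>
  let ⟨hle, hlt⟩ := Pi.lt_def.1 huv
  hΦ u v hle hlt

theorem le_of_forall_le_of_csInf_eq {s t : Set ℝ} {a b : ℝ} (hs : s.Nonempty)
    (ha : ∀ c ∈ s, a ≤ c) (hst : sInf s = sInf t) (ht : BddBelow t) (hb : b ∈ t) : a ≤ b :=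
  (le_csInf hs ha).trans (hst ▸ csInf_le ht hb)

section Penalty

variable {X E : Type*} [AddCommGroup E] [PartialOrder E] [IsOrderedAddMonoid E] [Module ℝ E]
  [PosSMulMono ℝ E] {Φ : E → ℝ} {f B : X → E} {S : Set X}

theorem le_penalized_of_isMinOn {t : ℝ} {x z : X} (hΦ : Monotone Φ) (ht : 0 ≤ t)
    (hBx : 0 ≤ B x) (hmin : IsMinOn (fun y => Φ (f y + t • B y)) S x) (hz : z ∈ S) :
    Φ (f x) ≤ Φ (f z + t • B z) :=
  (hΦ (le_add_of_nonneg_right (smul_nonneg ht hBx))).trans (hmin hz)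

theorem le_of_tendsto_of_isMinOn_penalized [TopologicalSpace X] [TopologicalSpace E]
    [ContinuousAdd E] [ContinuousSMul ℝ E] {κ : Type*} {l : Filter κ} [l.NeBot]
    {τ : κ → ℝ} {x : κ → X} {xbar z : X} (hΦ : Monotone Φ) (hΦc : Continuous Φ)
    (hf : ContinuousAt f xbar) (hB : ∀ y ∈ S, 0 ≤ B y) (hτ : ∀ k, 0 ≤ τ k)
    (hτ0 : Tendsto τ l (𝓝 0)) (hxS : ∀ k, x k ∈ S)
    (hmin : ∀ k, IsMinOn (fun y => Φ (f y + τ k • B y)) S (x k))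
    (hx : Tendsto x l (𝓝 xbar)) (hz : z ∈ S) :
    Φ (f xbar) ≤ Φ (f z) := by
  have hlim_x : Tendsto (fun k => Φ (f (x k))) l (𝓝 (Φ (f xbar))) :=
    (hΦc.tendsto _).comp (hf.tendsto.comp hx)
  have hlim_z : Tendsto (fun k => Φ (f z + τ k • B z)) l (𝓝 (Φ (f z))) := by
    simpa [Function.comp_def] using (hΦc.tendsto _).comp (tendsto_const_nhds.add (hτ0.smul_const (B z)))
  exact le_of_tendsto_of_tendsto' hlim_x hlim_z fun k =>
    le_penalized_of_isMinOn hΦ (hτ k) (hB _ (hxS k)) (hmin k) hz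

end Penalty

theorem stmt_13_general (n m : ℕ)
    (f : (Fin n → ℝ) → (Fin m → ℝ))
    (hf : Continuous f)
    (D : Set (Fin n → ℝ))
    (Dint : Set (Fin n → ℝ))
    (hne : Dint.Nonempty)
    (B : (Fin n → ℝ) → (Fin m → ℝ))
    (hB : ∀ x ∈ Dint, ∀ i, 0 ≤ B x i)
    (Φ : (Fin m → ℝ) → ℝ) (hΦc : Continuous Φ)
    (hΦs : ∀ u v : Fin m → ℝ, (∀ i, u i ≤ v i) → (∃ j, u j < v j) → Φ u < Φ v)
    (τ : ℕ → ℝ) (hτpos : ∀ k, 0 < τ k)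
    (hτ0 : Tendsto τ atTop (𝓝 0))
    (hbdd : BddBelow ((fun y => Φ (f y)) '' D))
    (hinf : sInf ((fun y => Φ (f y)) '' Dint) = sInf ((fun y => Φ (f y)) '' D))
    (x : ℕ → (Fin n → ℝ))
    (hx : ∀ k, x k ∈ Dint ∧
      ∀ y ∈ Dint, Φ (f (x k) + τ k • B (x k)) ≤ Φ (f y + τ k • B y))
    (xbar : Fin n → ℝ)
    (hacc : ∃ φ : ℕ → ℕ, StrictMono φ ∧ Tendsto (fun j => x (φ j)) atTop (𝓝 xbar)) :
    (∀ y ∈ D, Φ (f xbar) ≤ Φ (f y)) ∧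
    ¬ ∃ y ∈ D, (∀ j, f y j ≤ f xbar j) ∧ ∃ j0, f y j0 < f xbar j0 := by
  obtain ⟨φ, hφ, hlim⟩ := hacc
  have hΦ : StrictMono Φ := strictMono_of_forall_le_of_exists_lt hΦs
  have hmin_int : ∀ z ∈ Dint, Φ (f xbar) ≤ Φ (f z) := fun z hz =>
    le_of_tendsto_of_isMinOn_penalized hΦ.monotone hΦc hf.continuousAt hB
      (fun k => (hτpos (φ k)).le) (hτ0.comp hφ.tendsto_atTop) (fun k => (hx (φ k)).1)
      (fun k => isMinOn_iff.2 (hx (φ k)).2) hlim hz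
  have hmin : ∀ y ∈ D, Φ (f xbar) ≤ Φ (f y) := fun y hy =>
    le_of_forall_le_of_csInf_eq (hne.image _) (Set.forall_mem_image.2 hmin_int) hinf hbdd
      ⟨y, hy, rfl⟩
  refine ⟨hmin, ?_⟩
  rintro ⟨y, hy, hle, hlt⟩
  exact (hmin y hy).not_gt (hΦ (Pi.lt_def.2 ⟨hle, hlt⟩))

theorem stmt_13 (n m p : ℕ)
    (f : (Fin n → ℝ) → (Fin m → ℝ)) (g : (Fin n → ℝ) → (Fin p → ℝ))
    (hf : Continuous f) (hg : Continuous g)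
    (D : Set (Fin n → ℝ)) (hD : D = {x | ∀ i, g x i ≤ 0})
    (Dint : Set (Fin n → ℝ)) (hDint : Dint = {x | ∀ i, g x i < 0})
    (hne : Dint.Nonempty)
    (B : (Fin n → ℝ) → (Fin m → ℝ)) (hBc : ContinuousOn B Dint)
    (hB : ∀ x ∈ Dint, ∀ i, 0 ≤ B x i)
    (Φ : (Fin m → ℝ) → ℝ) (hΦc : Continuous Φ)
    (hΦs : ∀ u v : Fin m → ℝ, (∀ i, u i ≤ v i) → (∃ j, u j < v j) → Φ u < Φ v)
    (τ : ℕ → ℝ) (hτpos : ∀ k, 0 < τ k) (hτdec : StrictAnti τ)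
    (hτ0 : Tendsto τ atTop (𝓝 0))
    (hbdd : BddBelow ((fun y => Φ (f y)) '' D))
    (hinf : sInf ((fun y => Φ (f y)) '' Dint) = sInf ((fun y => Φ (f y)) '' D))
    (x : ℕ → (Fin n → ℝ))
    (hx : ∀ k, x k ∈ Dint ∧
      ∀ y ∈ Dint, Φ (f (x k) + τ k • B (x k)) ≤ Φ (f y + τ k • B y))
    (xbar : Fin n → ℝ) (hxbarD : xbar ∈ D)
    (hacc : ∃ φ : ℕ → ℕ, StrictMono φ ∧ Tendsto (fun j => x (φ j)) atTop (𝓝 xbar)) :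
    (∀ y ∈ D, Φ (f xbar) ≤ Φ (f y)) ∧
    ¬ ∃ y ∈ D, (∀ j, f y j ≤ f xbar j) ∧ ∃ j0, f y j0 < f xbar j0 :=
  stmt_13_general n m f hf D Dint hne B hB Φ hΦc hΦs τ hτpos hτ0 hbdd hinf x hx xbar hacc
end
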